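/- Let $\lambda \in L^\infty(\mathcal{F}_s)$ take values in $[0, C)$ and define the hitting time $\sigma(s, \lambda) := \inf\{\theta \ge 1 : \gamma(s+\theta) > \lambda\}$. Then for every stopping time $\tau \in \mathcal{T}(s)$, $V(\tau, \lambda) \ge V(\tau \wedge \sigma(s,\lambda), \lambda)$, where $V(\tau, \lambda) = \mathcal{E}(\sum_{t=1}^{\tau} \beta^t(h(s+t) - \lambda) \mid \mathcal{F}_s)$. -/

import Mathlib

open MeasureTheory Filter Classical Finset

variable {Ω : Type*} [MeasurableSpace Ω]

/-- An `(ℱ t)`-consistent coherent nonlinear expectation (Definition 2.2). -/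
structure ConsistentCNE (μ : Measure Ω) (ℱ : ℕ → MeasurableSpace Ω)
    (E : ℕ → (Ω → ℝ) → (Ω → ℝ)) : Prop where
  adapted : ∀ t X, Measurable[ℱ t] (E t X)
  mono : ∀ t (X Y : Ω → ℝ), Y ≤ᵐ[μ] X → E t Y ≤ᵐ[μ] E t X
  strictMono : ∀ t (X Y : Ω → ℝ), Y ≤ᵐ[μ] X → E t X =ᵐ[μ] E t Y → X =ᵐ[μ] Y
  transl : ∀ t (X c : Ω → ℝ), Measurable[ℱ t] c →
      E t (fun ω => X ω + c ω) =ᵐ[μ] fun ω => E t X ω + c ω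
  normalized : ∀ t, E t (fun _ => 0) =ᵐ[μ] fun _ => 0
  subadd : ∀ t (X Y : Ω → ℝ),
      E t (fun ω => X ω + Y ω) ≤ᵐ[μ] fun ω => E t X ω + E t Y ω
  posHom : ∀ t (X lam : Ω → ℝ), Measurable[ℱ t] lam → (∀ᵐ ω ∂μ, 0 ≤ lam ω) →
      E t (fun ω => lam ω * X ω) =ᵐ[μ] fun ω => lam ω * E t X ω
  lebesgue : ∀ t (Xn : ℕ → Ω → ℝ) (X : Ω → ℝ) (K : ℝ),
      (∀ n, ∀ᵐ ω ∂μ, |Xn n ω| ≤ K) →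
      (∀ᵐ ω ∂μ, Tendsto (fun n => Xn n ω) atTop (nhds (X ω))) →
      ∀ᵐ ω ∂μ, Tendsto (fun n => E t (Xn n) ω) atTop (nhds (E t X ω))
  tower : ∀ s t (X : Ω → ℝ), s ≤ t → E s X =ᵐ[μ] E s (E t X)

/-- `𝒯(s)`: the bounded positive `(ℱ (s+t))`-stopping times. -/
def stopTimes (ℱ : ℕ → MeasurableSpace Ω) (s : ℕ) : Set (Ω → ℕ) :=
  {τ | (∀ ω, 1 ≤ τ ω) ∧ (∃ B, ∀ ω, τ ω ≤ B) ∧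
    ∀ n, MeasurableSet[ℱ (s + n)] {ω | τ ω = n}}

/-- The optimal-stopping value
`V(τ, λ) = 𝓔(∑_{t=1}^{τ} β^t (h(s+t) - λ) | ℱ_s)`. -/
noncomputable def banditV (E : ℕ → (Ω → ℝ) → (Ω → ℝ)) (h : ℕ → Ω → ℝ) (β : ℝ)
    (s : ℕ) (τ : Ω → ℕ) (lam : Ω → ℝ) : Ω → ℝ :=
  E s (fun ω => ∑ t ∈ Finset.Icc 1 (τ ω), β ^ t * (h (s + t) ω - lam ω))

/-- The hitting time `σ(s, λ) = inf {θ ≥ 1 : γ(s + θ) > λ}` of the Gittins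
index process above a level `λ < C` (Definition 4.1). -/
noncomputable def hitTime (γ : ℕ → Ω → ℝ) (s : ℕ) (lam : Ω → ℝ) : Ω → ℕ :=
  fun ω => sInf {θ : ℕ | 1 ≤ θ ∧ lam ω < γ (s + θ) ω}

/-! Let `ρ k = stopOrContinue τ σ k` run on to `τ` where `σ ≤ k` and stop at `τ ∧ σ` elsewhere, so
that `ρ 0 = τ ∧ σ`, and `ρ N = τ` as soon as `γ (s + N) = C > λ`. Passing from `ρ k` to `ρ (k+1)`
changes the payoff only on the `ℱ (s+k+1)`-event `{σ = k+1 < τ}`, where it adds `β^(k+1)` times the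
payoff of continuing until `τ` at level `λ < γ (s+k+1)`. Conditionally on `ℱ (s+k+1)`, locality of
`E` and `V(·, γ (s+k+1)) ≥ 0` make this gain nonnegative, and the tower property carries the
inequality down to `ℱ s`. -/

theorem Finset.sum_Icc_one_add {M : Type*} [AddCommMonoid M] (f : ℕ → M) (n m : ℕ) :
    ∑ t ∈ Icc 1 (n + m), f t = ∑ t ∈ Icc 1 n, f t + ∑ u ∈ Icc 1 m, f (n + u) := by
  induction m with
  | zero => simp
  | succ m ih =>
    rw [← add_assoc, sum_Icc_succ_top (by omega), ih, sum_Icc_succ_top (by omega), add_assoc,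
      add_assoc]

namespace ConsistentCNE

variable {μ : Measure Ω} {ℱ : ℕ → MeasurableSpace Ω} {E : ℕ → (Ω → ℝ) → (Ω → ℝ)}
  {t : ℕ} {A : Set Ω} {X Y : Ω → ℝ}

theorem ae_eq_self_of_measurable (hE : ConsistentCNE μ ℱ E) (hX : Measurable[ℱ t] X) :
    E t X =ᵐ[μ] X := by
  filter_upwards [hE.transl t (fun _ => 0) X hX, hE.normalized t] with ω hω h0
  simpa [h0] using hω

theorem const_add_mul (hE : ConsistentCNE μ ℱ E) {c : Ω → ℝ} (hc : Measurable[ℱ t] c)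
    {b : ℝ} (hb : 0 ≤ b) (X : Ω → ℝ) :
    E t (fun ω => c ω + b * X ω) =ᵐ[μ] fun ω => c ω + b * E t X ω := by
  have hadd := hE.transl t (fun ω => b * X ω) c hc
  have hmul := hE.posHom t X (fun _ => b) measurable_const (.of_forall fun _ => hb)
  simp only [add_comm (c _)] at hadd ⊢
  filter_upwards [hadd, hmul] with ω h1 h2
  rw [h1, h2]

theorem indicator_ae_eq (hE : ConsistentCNE μ ℱ E) (hA : MeasurableSet[ℱ t] A) (X : Ω → ℝ) :
    E t (A.indicator X) =ᵐ[μ] A.indicator (E t X) := by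
  have h := hE.posHom t X (A.indicator 1) (measurable_const.indicator hA)
    (.of_forall fun _ => Set.indicator_nonneg (fun _ _ => zero_le_one) _)
  simp only [← Set.indicator_mul_left, Pi.one_apply, one_mul] at h
  exact h

theorem ae_eq_on (hE : ConsistentCNE μ ℱ E) (hA : MeasurableSet[ℱ t] A)
    (hXY : ∀ ω ∈ A, X ω = Y ω) : ∀ᵐ ω ∂μ, ω ∈ A → E t X ω = E t Y ω := by
  have hind : A.indicator X = A.indicator Y := Set.indicator_congr hXY
  filter_upwards [hE.indicator_ae_eq hA X, hE.indicator_ae_eq hA Y] with ω hX hY hω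
  rw [← Set.indicator_of_mem hω (E t X), ← hX, hind, hY, Set.indicator_of_mem hω]

theorem ae_le_on (hE : ConsistentCNE μ ℱ E) (hA : MeasurableSet[ℱ t] A)
    (hXY : ∀ ω ∈ A, X ω ≤ Y ω) : ∀ᵐ ω ∂μ, ω ∈ A → E t X ω ≤ E t Y ω := by
  have hle : X ≤ᵐ[μ] A.piecewise Y X := .of_forall fun ω => by
    by_cases hω : ω ∈ A <;> simp [hω, hXY]
  filter_upwards [hE.mono t _ _ hle, hE.ae_eq_on hA fun ω hω => Set.piecewise_eq_of_mem A Y X hω]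
    with ω hmono heq hω
  exact hmono.trans (heq hω).le

end ConsistentCNE

section HitTime

variable {α : Type*} {γ : ℕ → α → ℝ} {s : ℕ} {lam : α → ℝ} {ω : α}

theorem hitTime_le {θ : ℕ} (hθ : 1 ≤ θ) (hlt : lam ω < γ (s + θ) ω) : hitTime γ s lam ω ≤ θ :=
  Nat.sInf_le ⟨hθ, hlt⟩

theorem hitTime_spec (hne : ∃ θ, 1 ≤ θ ∧ lam ω < γ (s + θ) ω) :
    1 ≤ hitTime γ s lam ω ∧ lam ω < γ (s + hitTime γ s lam ω) ω :=
  Nat.sInf_mem hne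

theorem hitTime_le_iff (hne : ∃ θ, 1 ≤ θ ∧ lam ω < γ (s + θ) ω) {n : ℕ} :
    hitTime γ s lam ω ≤ n ↔ ∃ m ∈ Icc 1 n, lam ω < γ (s + m) ω := by
  constructor
  · intro hle
    obtain ⟨h1, hlt⟩ := hitTime_spec hne
    exact ⟨_, mem_Icc.2 ⟨h1, hle⟩, hlt⟩
  · rintro ⟨m, hm, hlt⟩
    exact (hitTime_le (mem_Icc.1 hm).1 hlt).trans (mem_Icc.1 hm).2

theorem measurableSet_hitTime_le {ℱ : ℕ → MeasurableSpace α} (hℱ : Monotone ℱ)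
    (hγ : ∀ t, Measurable[ℱ t] (γ t)) (hlam : Measurable[ℱ s] lam)
    (hne : ∀ ω, ∃ θ, 1 ≤ θ ∧ lam ω < γ (s + θ) ω) (n : ℕ) :
    MeasurableSet[ℱ (s + n)] {ω | hitTime γ s lam ω ≤ n} := by
  have heq : {ω | hitTime γ s lam ω ≤ n} = ⋃ m ∈ Icc 1 n, {ω | lam ω < γ (s + m) ω} := by
    ext ω
    simp only [Set.mem_ofPred_eq, Set.mem_iUnion, exists_prop, hitTime_le_iff (hne ω)]
  rw [heq]
  refine Finset.measurableSet_biUnion _ fun m hm => ?_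
  have hsm : s + m ≤ s + n := by simp only [mem_Icc] at hm; omega
  exact hℱ hsm _ (measurableSet_lt (hlam.mono (hℱ le_self_add) le_rfl) (hγ _))

end HitTime

section StopTimes

variable {α : Type*} {ℱ : ℕ → MeasurableSpace α} {s : ℕ} {τ : α → ℕ}

theorem measurableSet_le_of_mem_stopTimes (hℱ : Monotone ℱ) (hτ : τ ∈ stopTimes ℱ s) (n : ℕ) :
    MeasurableSet[ℱ (s + n)] {ω | τ ω ≤ n} := by
  have heq : {ω | τ ω ≤ n} = ⋃ m ∈ range (n + 1), {ω | τ ω = m} := by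
    ext ω
    simp
  rw [heq]
  exact measurableSet_biUnion _ fun m hm => hℱ (by simp only [mem_range] at hm; omega) _ (hτ.2.2 m)

/-- Set to `1` where `τ` has already stopped, so that it lies in `𝒯(s + n)`. -/
def residualTime (τ : α → ℕ) (n : ℕ) : α → ℕ := fun ω => if n < τ ω then τ ω - n else 1

theorem residualTime_mem_stopTimes (hℱ : Monotone ℱ) (hτ : τ ∈ stopTimes ℱ s) (n : ℕ) :
    residualTime τ n ∈ stopTimes ℱ (s + n) := by
  obtain ⟨hτ1, ⟨B, hB⟩, hτm⟩ := id hτ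
  refine ⟨fun ω => ?_, ⟨B, fun ω => ?_⟩, fun m => ?_⟩
  · unfold residualTime; split_ifs <;> omega
  · have := hτ1 ω; have := hB ω
    unfold residualTime; split_ifs <;> omega
  · have heq : {ω | residualTime τ n ω = m}
        = {ω | τ ω = n + m} ∩ {_ω | 0 < m} ∪ {ω | τ ω ≤ n} ∩ {_ω | m = 1} := by
      ext ω
      simp only [residualTime, Set.mem_ofPred_eq, Set.mem_union, Set.mem_inter_iff]
      split_ifs <;> omega
    rw [heq, add_assoc]
    exact ((hτm _).inter (.const _)).union
      ((hℱ (by omega) _ (measurableSet_le_of_mem_stopTimes hℱ hτ n)).inter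
        (.const _))

def stopOrContinue (τ σ : α → ℕ) (k : ℕ) : α → ℕ :=
  fun ω => if σ ω ≤ k then τ ω else min (τ ω) (σ ω)

theorem stopOrContinue_zero {σ : α → ℕ} (hσ : ∀ ω, 1 ≤ σ ω) :
    stopOrContinue τ σ 0 = fun ω => min (τ ω) (σ ω) :=
  funext fun ω => if_neg (not_le.2 (hσ ω))

theorem stopOrContinue_of_le {σ : α → ℕ} {N : ℕ} (hσ : ∀ ω, σ ω ≤ N) : stopOrContinue τ σ N = τ :=
  funext fun ω => if_pos (hσ ω)

theorem stopOrContinue_succ (σ : α → ℕ) (k : ℕ)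
    [DecidablePred (· ∈ {ω | σ ω = k + 1 ∧ k + 1 < τ ω})] :
    stopOrContinue τ σ (k + 1) = {ω | σ ω = k + 1 ∧ k + 1 < τ ω}.piecewise
      (fun ω => k + 1 + residualTime τ (k + 1) ω) (stopOrContinue τ σ k) := by
  funext ω
  simp only [stopOrContinue, residualTime, Set.piecewise, Set.mem_ofPred_eq]
  split_ifs <;> omega

theorem measurableSet_eq_succ_lt (hℱ : Monotone ℱ) (hτ : τ ∈ stopTimes ℱ s) {σ : α → ℕ}
    (hσ : ∀ n, MeasurableSet[ℱ (s + n)] {ω | σ ω ≤ n}) (k : ℕ) :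
    MeasurableSet[ℱ (s + (k + 1))] {ω | σ ω = k + 1 ∧ k + 1 < τ ω} := by
  have heq : {ω | σ ω = k + 1 ∧ k + 1 < τ ω}
      = {ω | σ ω ≤ k + 1} ∩ {ω | σ ω ≤ k}ᶜ ∩ {ω | τ ω ≤ k + 1}ᶜ := by
    ext ω
    simp only [Set.mem_ofPred_eq, Set.mem_inter_iff, Set.mem_compl_iff]
    omega
  rw [heq]
  exact ((hσ _).inter (hℱ (by omega) _ (hσ k)).compl).inter
    (measurableSet_le_of_mem_stopTimes hℱ hτ _).compl

end StopTimes

section Bandit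

variable {μ : Measure Ω} {ℱ : ℕ → MeasurableSpace Ω} {E : ℕ → (Ω → ℝ) → (Ω → ℝ)}
  {h : ℕ → Ω → ℝ} {β : ℝ} {s : ℕ} {lam : Ω → ℝ}

theorem banditV_le_banditV_piecewise (hE : ConsistentCNE μ ℱ E) (hℱ : Monotone ℱ)
    (hh : ∀ t, Measurable[ℱ t] (h t)) (hβ : 0 ≤ β) (hlam : Measurable[ℱ s] lam)
    {n : ℕ} {A : Set Ω} [DecidablePred (· ∈ A)] (hA : MeasurableSet[ℱ (s + n)] A)
    {ρ θ : Ω → ℕ} {g : Ω → ℝ}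
    (hθ : 0 ≤ᵐ[μ] banditV E h β (s + n) θ g)
    (hρ : ∀ ω ∈ A, ρ ω = n) (hg : ∀ ω ∈ A, lam ω ≤ g ω) :
    banditV E h β s ρ lam ≤ᵐ[μ] banditV E h β s (A.piecewise (fun ω => n + θ ω) ρ) lam := by
  set ρ' := A.piecewise (fun ω => n + θ ω) ρ
  set G : (Ω → ℕ) → Ω → ℝ := fun ρ ω => ∑ t ∈ Icc 1 (ρ ω), β ^ t * (h (s + t) ω - lam ω)
  set W : Ω → ℝ := fun ω => ∑ u ∈ Icc 1 (θ ω), β ^ u * (h (s + n + u) ω - g ω)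
  have hGn : Measurable[ℱ (s + n)] (G fun _ => n) := by
    refine Finset.measurable_sum _ fun t ht => ?_
    have hts : s + t ≤ s + n := by simp only [mem_Icc] at ht; omega
    exact (((hh _).mono (hℱ hts) le_rfl).sub (hlam.mono (hℱ (by omega)) le_rfl)).const_mul _
  have hcont : ∀ ω ∈ A, G (fun _ => n) ω + β ^ n * W ω ≤ G ρ' ω := by
    intro ω hω
    simp only [G, W, ρ', Set.piecewise_eq_of_mem _ _ _ hω, sum_Icc_one_add, mul_sum]
    gcongr ∑ t ∈ Icc 1 n, _ + ?_
    refine sum_le_sum fun u _ => ?_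
    rw [pow_add, mul_assoc, add_assoc]
    gcongr
    exact hg ω hω
  have hcond : E (s + n) (G ρ) ≤ᵐ[μ] E (s + n) (G ρ') := by
    filter_upwards
      [hE.ae_eq_on hA (X := G ρ) (Y := G fun _ => n) (fun ω hω => by simp [G, hρ ω hω]),
      hE.ae_eq_self_of_measurable hGn, hE.const_add_mul hGn (pow_nonneg hβ n) W, hθ,
      hE.ae_le_on hA hcont,
      hE.ae_eq_on hA.compl (X := G ρ) (Y := G ρ')
        (fun ω hω => by simp [G, ρ', Set.piecewise_eq_of_notMem _ _ _ hω])]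
      with ω hstop hGn' hadd hθω hle hout
    by_cases hω : ω ∈ A
    · calc E (s + n) (G ρ) ω = G (fun _ => n) ω := (hstop hω).trans hGn'
        _ ≤ G (fun _ => n) ω + β ^ n * E (s + n) W ω :=
          le_add_of_nonneg_right (mul_nonneg (pow_nonneg hβ n) hθω)
        _ = E (s + n) (fun ω => G (fun _ => n) ω + β ^ n * W ω) ω := hadd.symm
        _ ≤ E (s + n) (G ρ') ω := hle hω
    · exact (hout hω).le
  calc banditV E h β s ρ lam =ᵐ[μ] E s (E (s + n) (G ρ)) := hE.tower s (s + n) _ le_self_add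
    _ ≤ᵐ[μ] E s (E (s + n) (G ρ')) := hE.mono s _ _ hcond
    _ =ᵐ[μ] banditV E h β s ρ' lam := (hE.tower s (s + n) _ le_self_add).symm

theorem banditV_stopOrContinue_le_succ (hE : ConsistentCNE μ ℱ E) (hℱ : Monotone ℱ)
    (hh : ∀ t, Measurable[ℱ t] (h t)) (hβ : 0 ≤ β) {γ : ℕ → Ω → ℝ}
    (hγ : ∀ t, Measurable[ℱ t] (γ t)) (hlam : Measurable[ℱ s] lam)
    (hne : ∀ ω, ∃ θ, 1 ≤ θ ∧ lam ω < γ (s + θ) ω) {τ : Ω → ℕ} (hτ : τ ∈ stopTimes ℱ s) (k : ℕ)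
    (hγV : ∀ θ ∈ stopTimes ℱ (s + (k + 1)),
      0 ≤ᵐ[μ] banditV E h β (s + (k + 1)) θ (γ (s + (k + 1)))) :
    banditV E h β s (stopOrContinue τ (hitTime γ s lam) k) lam
      ≤ᵐ[μ] banditV E h β s (stopOrContinue τ (hitTime γ s lam) (k + 1)) lam := by
  rw [stopOrContinue_succ]
  refine banditV_le_banditV_piecewise hE hℱ hh hβ hlam
    (measurableSet_eq_succ_lt hℱ hτ (measurableSet_hitTime_le hℱ hγ hlam hne) k)
    (hγV _ (residualTime_mem_stopTimes hℱ hτ _)) (fun ω hω => ?_) (fun ω hω => ?_)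
  · simp only [stopOrContinue, hω.1]
    have hτk := hω.2
    split_ifs <;> omega
  · have hhit := (hitTime_spec (hne ω)).2
    rw [hω.1] at hhit
    exact hhit.le

end Bandit

theorem stmt6_general (μ : Measure Ω)
    (ℱ : ℕ → MeasurableSpace Ω) (hℱmono : Monotone ℱ)
    (E : ℕ → (Ω → ℝ) → (Ω → ℝ)) (hE : ConsistentCNE μ ℱ E)
    (T : ℕ) (C : ℝ) (β : ℝ) (hβ : β ∈ Set.Ioo (0 : ℝ) 1)
    (h : ℕ → Ω → ℝ) (hhAdapted : ∀ t, Measurable[ℱ t] (h t))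
    -- the robust Gittins index process
    (γ : ℕ → Ω → ℝ) (hγAdapted : ∀ t, Measurable[ℱ t] (γ t))
    (hγC : ∀ t, T ≤ t → ∀ ω, γ t ω = C)
    -- known: `V(τ, γ(s')) ≥ 0` for all `τ ∈ 𝒯(s')` (Corollary 4.1)
    (hknown : ∀ s', ∀ τ ∈ stopTimes ℱ s',
      (0 : Ω → ℝ) ≤ᵐ[μ] banditV E h β s' τ (γ s'))
    (s : ℕ) (lam : Ω → ℝ) (hlamMeas : Measurable[ℱ s] lam)
    (hlam : ∀ ω, 0 ≤ lam ω ∧ lam ω < C) :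
    ∀ τ ∈ stopTimes ℱ s,
      banditV E h β s (fun ω => min (τ ω) (hitTime γ s lam ω)) lam
        ≤ᵐ[μ] banditV E h β s τ lam := by
  intro τ hτ
  set N := max 1 (T - s)
  have hNhit : ∀ ω, 1 ≤ N ∧ lam ω < γ (s + N) ω := fun ω =>
    ⟨le_max_left _ _, by rw [hγC _ (by omega)]; exact (hlam ω).2⟩
  have hne : ∀ ω, ∃ θ, 1 ≤ θ ∧ lam ω < γ (s + θ) ω := fun ω => ⟨N, hNhit ω⟩
  have hchain : ∀ k, banditV E h β s (stopOrContinue τ (hitTime γ s lam) 0) lam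
      ≤ᵐ[μ] banditV E h β s (stopOrContinue τ (hitTime γ s lam) k) lam := by
    intro k
    induction k with
    | zero => exact .rfl
    | succ k ih => exact ih.trans (banditV_stopOrContinue_le_succ hE hℱmono hhAdapted hβ.1.le
        hγAdapted hlamMeas hne hτ k (hknown _))
  simpa only [stopOrContinue_zero fun ω => (hitTime_spec (hne ω)).1,
    stopOrContinue_of_le fun ω => hitTime_le (hNhit ω).1 (hNhit ω).2] using hchain N

/-- **Lemma 4.1.**  For `λ ∈ L^∞(ℱ_s)` with values in `[0, C)` and the hitting
time `σ(s,λ) = inf {θ ≥ 1 : γ(s+θ) > λ}`, for every `τ ∈ 𝒯(s)` we have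
`V(τ ∧ σ(s,λ), λ) ≤ V(τ, λ)`. -/
theorem stmt6 (μ : Measure Ω) [IsProbabilityMeasure μ]
    (ℱ : ℕ → MeasurableSpace Ω) (hℱmono : Monotone ℱ)
    (hℱle : ∀ t, ℱ t ≤ ‹MeasurableSpace Ω›)
    (E : ℕ → (Ω → ℝ) → (Ω → ℝ)) (hE : ConsistentCNE μ ℱ E)
    (T : ℕ) (C : ℝ) (hC : 0 < C) (β : ℝ) (hβ : β ∈ Set.Ioo (0 : ℝ) 1)
    (h : ℕ → Ω → ℝ) (hhAdapted : ∀ t, Measurable[ℱ t] (h t))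
    (hhBdd : ∀ t, t ≤ T → ∀ ω, 0 ≤ h t ω ∧ h t ω < C)
    (hhC : ∀ t, T < t → ∀ ω, h t ω = C)
    -- the robust Gittins index process
    (γ : ℕ → Ω → ℝ) (hγAdapted : ∀ t, Measurable[ℱ t] (γ t))
    (hγBdd : ∀ t, t < T → ∀ ω, 0 ≤ γ t ω ∧ γ t ω < C)
    (hγC : ∀ t, T ≤ t → ∀ ω, γ t ω = C)
    -- known: `V(τ, γ(s')) ≥ 0` for all `τ ∈ 𝒯(s')` (Corollary 4.1)
    (hknown : ∀ s', ∀ τ ∈ stopTimes ℱ s',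
      (0 : Ω → ℝ) ≤ᵐ[μ] banditV E h β s' τ (γ s'))
    (s : ℕ) (lam : Ω → ℝ) (hlamMeas : Measurable[ℱ s] lam)
    (hlam : ∀ ω, 0 ≤ lam ω ∧ lam ω < C) :
    ∀ τ ∈ stopTimes ℱ s,
      banditV E h β s (fun ω => min (τ ω) (hitTime γ s lam ω)) lam
        ≤ᵐ[μ] banditV E h β s τ lam :=
  stmt6_general μ ℱ hℱmono E hE T C β hβ h hhAdapted γ hγAdapted hγC hknown s lam hlamMeas hlam
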